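/- arXiv:math/9911154 — 2 statements merged into one kernel-verified Lean document; each statement's English description precedes it below -/
import Mathlib

section
/- Let U : V → V be a ℂ-linear map such that ‖U u‖ = ‖u‖ for all u ∈ V and U(∂u/∂x_i) = ∂(U u)/∂x_i for i = 1,2,3. Let 0 < δ < 1 and let ν ∈ V satisfy |ν(x)| ≤ δ for all x. Denote by T : V → V the map T f = U(ν·f). Then for every integer k ≥ 1, every r ∈ {1,2,3}, and every f ∈ V, one has ‖∂(T^k f)/∂x_r‖ ≤ δ^k ‖∂f/∂x_r‖ + k δ^{k−1} (sup_x |∂ν/∂x_r(x)|)·‖f‖. In particular, ‖∂(T^k f)/∂x_r‖ ≤ c·k·δ^{k−1}·(‖f‖ + ‖∂f/∂x_r‖) with c = δ + sup|∂ν/∂x_r|. -/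
open Real Complex

noncomputable section

/-- Points of `ℝ³`. -/
abbrev R3 : Type := Fin 3 → ℝ

/-- A function on `ℝ³` is periodic if it is invariant under translation by `2π`
in each coordinate (so it descends to the torus `T³ = ℝ³/2πℤ³`). -/
def Periodic3 (u : R3 → ℂ) : Prop :=
  ∀ (x : R3) (i : Fin 3), u (x + Pi.single i (2 * Real.pi)) = u x

/-- Partial derivative in the `i`-th coordinate direction. -/
noncomputable def pd (i : Fin 3) (u : R3 → ℂ) (x : R3) : ℂ :=
  fderiv ℝ u x (Pi.single i 1)

/-- `D_z u = (1/2)(∂u/∂x₁ − i ∂u/∂x₂) + ((a₁ − i a₂)/2) ∂u/∂x₃`. -/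
noncomputable def Dz (a₁ a₂ : ℝ) (u : R3 → ℂ) (x : R3) : ℂ :=
  (1 / 2) * (pd 0 u x - Complex.I * pd 1 u x)
    + (((a₁ : ℂ) - Complex.I * (a₂ : ℂ)) / 2) * pd 2 u x

/-- `D_z̄ u = (1/2)(∂u/∂x₁ + i ∂u/∂x₂) + ((a₁ + i a₂)/2) ∂u/∂x₃`. -/
noncomputable def Dzbar (a₁ a₂ : ℝ) (u : R3 → ℂ) (x : R3) : ℂ :=
  (1 / 2) * (pd 0 u x + Complex.I * pd 1 u x)
    + (((a₁ : ℂ) + Complex.I * (a₂ : ℂ)) / 2) * pd 2 u x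

/-- Membership in `V`: `C^∞` functions `ℝ³ → ℂ` invariant under translation by `2π`
in each coordinate (i.e. functions on the torus `T³`). -/
def MemV (u : R3 → ℂ) : Prop :=
  ContDiff ℝ (⊤ : ℕ∞) u ∧ Periodic3 u

/-- The `L²` norm `‖u‖ = (∫_{[0,2π]³} |u(x)|² dx)^{1/2}`. -/
noncomputable def l2norm (u : R3 → ℂ) : ℝ :=
  Real.sqrt (∫ x in Set.Icc (0 : R3) (fun _ => 2 * Real.pi), ‖u x‖ ^ 2)

/-!
Since `U` is an `L²`-isometry and `|ν| ≤ δ`, the map `T g = U (ν g)` satisfies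
`‖T g‖ ≤ δ ‖g‖`. Because `U` commutes with `∂_r`, the Leibniz rule gives
`‖∂_r (T g)‖ ≤ M ‖g‖ + δ ‖∂_r g‖` with `M = sup |∂_r ν|`, which is finite since `∂_r ν` is
continuous and periodic. Unrolling this pair of recursive inequalities along `T^[n] f` gives
`δ^k ‖∂_r f‖ + k δ^(k-1) M ‖f‖`.
-/

open MeasureTheory Function

def cube : Set R3 := Set.Icc 0 fun _ => 2 * π

instance : IsFiniteMeasure (volume.restrict cube) :=
  isFiniteMeasure_restrict.2 isCompact_Icc.measure_lt_top.ne

section L2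

variable {u v : R3 → ℂ}

lemma l2norm_nonneg (u : R3 → ℂ) : 0 ≤ l2norm u := Real.sqrt_nonneg _

lemma Continuous.memLp_two_cube (hu : Continuous u) : MemLp u 2 (volume.restrict cube) := by
  obtain ⟨C, hC⟩ := isCompact_Icc.exists_bound_of_continuousOn hu.continuousOn
  exact .of_bound hu.aestronglyMeasurable C
    ((ae_restrict_iff' measurableSet_Icc).2 (ae_of_all _ hC))

lemma l2norm_eq_toReal_eLpNorm (hu : Continuous u) :
    l2norm u = (eLpNorm u 2 (volume.restrict cube)).toReal := by
  rw [hu.memLp_two_cube.eLpNorm_eq_integral_rpow_norm two_ne_zero ENNReal.ofNat_ne_top,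
    ENNReal.toReal_ofReal (by positivity), l2norm, Real.sqrt_eq_rpow]
  norm_num [cube]

lemma l2norm_add_le (hu : Continuous u) (hv : Continuous v) :
    l2norm (u + v) ≤ l2norm u + l2norm v := by
  rw [l2norm_eq_toReal_eLpNorm (hu.add hv), l2norm_eq_toReal_eLpNorm hu,
    l2norm_eq_toReal_eLpNorm hv, ← ENNReal.toReal_add hu.memLp_two_cube.eLpNorm_ne_top
      hv.memLp_two_cube.eLpNorm_ne_top]
  exact ENNReal.toReal_mono (by simp [hu.memLp_two_cube.eLpNorm_ne_top,
    hv.memLp_two_cube.eLpNorm_ne_top])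
    (eLpNorm_add_le hu.aestronglyMeasurable hv.aestronglyMeasurable one_le_two)

lemma l2norm_mul_le {C : ℝ} (hu : Continuous u) (hv : Continuous v) (hC : ∀ x, ‖u x‖ ≤ C) :
    l2norm (fun x => u x * v x) ≤ C * l2norm v := by
  have hC0 : 0 ≤ C := (norm_nonneg (u 0)).trans (hC 0)
  have hle := eLpNorm_le_mul_eLpNorm_of_ae_le_mul (μ := volume.restrict cube)
    (ae_of_all _ fun x => (norm_mul (u x) (v x)).trans_le
      (mul_le_mul_of_nonneg_right (hC x) (norm_nonneg (v x)))) 2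
  rw [l2norm_eq_toReal_eLpNorm (u := fun x => u x * v x) (hu.mul hv),
    l2norm_eq_toReal_eLpNorm hv, ← ENNReal.toReal_ofReal hC0, ← ENNReal.toReal_mul]
  exact ENNReal.toReal_mono
    (ENNReal.mul_ne_top ENNReal.ofReal_ne_top hv.memLp_two_cube.eLpNorm_ne_top) hle

end L2

section Calculus

variable {u v : R3 → ℂ}

lemma ContDiff.pd (hu : ContDiff ℝ (⊤ : ℕ∞) u) (i : Fin 3) : ContDiff ℝ (⊤ : ℕ∞) (pd i u) :=
  (hu.fderiv_right (by simp)).clm_apply contDiff_const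

lemma Periodic3.pd (hu : Periodic3 u) (i : Fin 3) : Periodic3 (pd i u) := by
  intro x j
  have hshift : (fun y => u (y + Pi.single j (2 * π))) = u := funext fun y => hu y j
  show fderiv ℝ u _ _ = fderiv ℝ u _ _
  rw [← fderiv_comp_add_right, hshift]

lemma MemV.pd (hu : MemV u) (i : Fin 3) : MemV (pd i u) :=
  ⟨hu.1.pd i, hu.2.pd i⟩

lemma MemV.mul (hu : MemV u) (hv : MemV v) : MemV fun x => u x * v x :=
  ⟨hu.1.mul hv.1, fun x i => by simp only [hu.2 x i, hv.2 x i]⟩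

lemma pd_mul (hu : Differentiable ℝ u) (hv : Differentiable ℝ v) (i : Fin 3) :
    pd i (fun x => u x * v x) = (fun x => pd i u x * v x) + fun x => u x * pd i v x := by
  funext x
  simp only [pd, fderiv_fun_mul (hu x) (hv x), add_apply, smul_apply, smul_eq_mul, Pi.add_apply]
  ring

end Calculus

section Periodicity

variable {u : R3 → ℂ}

lemma Periodic3.exists_mem_cube_eq (hu : Periodic3 u) (x : R3) : ∃ y ∈ cube, u y = u x := by
  let n : Fin 3 → ℤ := fun i => toIcoDiv Real.two_pi_pos 0 (x i)
  let shift : R3 := ∑ i, n i • Pi.single i (2 * π)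
  have hshift : Periodic u shift :=
    Finset.sum_induction _ (Periodic u) (fun _ _ => Periodic.add_period)
      (periodic_with_period_zero u) fun i _ => Periodic.zsmul (hu · i) (n i)
  have hmem : ∀ i, (x - shift) i ∈ Set.Ico 0 (2 * π) := fun i => by
    have hi : (x - shift) i = toIcoMod Real.two_pi_pos 0 (x i) := by
      simp only [shift, Pi.sub_apply, Finset.sum_apply, Pi.smul_apply, Pi.single_apply, smul_ite,
        smul_zero, Finset.sum_ite_eq, Finset.mem_univ, if_true]
      exact self_sub_toIcoDiv_zsmul _ _ _
    exact hi ▸ toIcoMod_mem_Ico' Real.two_pi_pos (x i)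
  exact ⟨x - shift, ⟨fun i => (hmem i).1, fun i => (hmem i).2.le⟩, hshift.sub_eq x⟩

lemma Periodic3.bddAbove_range_norm (hu : Periodic3 u) (hc : Continuous u) :
    BddAbove (Set.range fun x => ‖u x‖) := by
  obtain ⟨C, hC⟩ := isCompact_Icc.exists_bound_of_continuousOn (s := cube) hc.continuousOn
  refine ⟨C, ?_⟩
  rintro _ ⟨x, rfl⟩
  obtain ⟨y, hy, hyx⟩ := hu.exists_mem_cube_eq x
  simpa [hyx] using hC y hy

end Periodicity

section Recurrence

variable {δ M : ℝ}

lemma le_pow_mul_add_of_le_mul_add {a b : ℕ → ℝ} (hδ : 0 ≤ δ) (hM : 0 ≤ M)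
    (ha : ∀ n, a (n + 1) ≤ δ * a n) (hb : ∀ n, b (n + 1) ≤ M * a n + δ * b n) (n : ℕ) :
    b n ≤ δ ^ n * b 0 + n * δ ^ (n - 1) * M * a 0 := by
  induction n with
  | zero => simp
  | succ n ih =>
    have han : a n ≤ δ ^ n * a 0 := le_geom hδ n fun k _ => ha k
    have hδn : δ * (n * δ ^ (n - 1)) = n * δ ^ n := by
      rcases n with _ | n
      · simp
      · rw [Nat.add_sub_cancel, pow_succ]; ring
    calc b (n + 1) ≤ M * a n + δ * b n := hb n
      _ ≤ M * (δ ^ n * a 0) + δ * (δ ^ n * b 0 + n * δ ^ (n - 1) * M * a 0) := by gcongr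
      _ = δ ^ (n + 1) * b 0 + (n + 1 : ℕ) * δ ^ (n + 1 - 1) * M * a 0 := by
        rw [Nat.add_sub_cancel]; push_cast; linear_combination M * a 0 * hδn

lemma pow_mul_add_le_mul {a b : ℝ} {k : ℕ} (hδ : 0 ≤ δ) (hM : 0 ≤ M) (ha : 0 ≤ a) (hb : 0 ≤ b)
    (hk : 1 ≤ k) :
    δ ^ k * b + k * δ ^ (k - 1) * M * a ≤ (δ + M) * k * δ ^ (k - 1) * (a + b) := by
  obtain ⟨j, rfl⟩ := Nat.exists_eq_add_of_le' hk
  rw [Nat.add_sub_cancel, pow_succ]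
  push_cast
  nlinarith [mul_nonneg (pow_nonneg hδ j)
    (by positivity : 0 ≤ δ * (j + 1) * a + δ * j * b + M * (j + 1) * b)]

end Recurrence

section Transfer

variable {U : (R3 → ℂ) → (R3 → ℂ)} {ν g : R3 → ℂ} {δ M : ℝ}

lemma l2norm_map_mul_le (hU_iso : ∀ u, MemV u → l2norm (U u) = l2norm u) (hν : MemV ν)
    (hg : MemV g) (hνδ : ∀ x, ‖ν x‖ ≤ δ) :
    l2norm (U fun x => ν x * g x) ≤ δ * l2norm g := by
  rw [hU_iso _ (hν.mul hg)]
  exact l2norm_mul_le hν.1.continuous hg.1.continuous hνδ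

lemma l2norm_pd_map_mul_le (hU_mem : ∀ u, MemV u → MemV (U u))
    (hU_add : ∀ u v, MemV u → MemV v → U (u + v) = U u + U v)
    (hU_iso : ∀ u, MemV u → l2norm (U u) = l2norm u)
    (hU_comm : ∀ u, MemV u → ∀ i : Fin 3, U (pd i u) = pd i (U u))
    (hν : MemV ν) (hg : MemV g) (r : Fin 3) (hνδ : ∀ x, ‖ν x‖ ≤ δ) (hM : ∀ x, ‖pd r ν x‖ ≤ M) :
    l2norm (pd r (U fun x => ν x * g x)) ≤ M * l2norm g + δ * l2norm (pd r g) := by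
  have hA := (hν.pd r).mul hg
  have hB := hν.mul (hg.pd r)
  rw [← hU_comm _ (hν.mul hg) r,
    pd_mul (hν.1.differentiable (by simp)) (hg.1.differentiable (by simp)), hU_add _ _ hA hB]
  calc _ ≤ l2norm (U fun x => pd r ν x * g x) + l2norm (U fun x => ν x * pd r g x) :=
        l2norm_add_le (hU_mem _ hA).1.continuous (hU_mem _ hB).1.continuous
    _ ≤ M * l2norm g + δ * l2norm (pd r g) :=
        add_le_add (l2norm_map_mul_le hU_iso (hν.pd r) hg hM)
          (l2norm_map_mul_le hU_iso hν (hg.pd r) hνδ)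

end Transfer

theorem proposition1_estimate_general (U : (R3 → ℂ) → (R3 → ℂ))
    (hU_mem : ∀ u, MemV u → MemV (U u))
    (hU_add : ∀ u v, MemV u → MemV v → U (u + v) = U u + U v)
    (hU_iso : ∀ u, MemV u → l2norm (U u) = l2norm u)
    (hU_comm : ∀ u, MemV u → ∀ i : Fin 3, U (pd i u) = pd i (U u))
    (δ : ℝ)
    (ν : R3 → ℂ) (hν : MemV ν) (hν_le : ∀ x, ‖ν x‖ ≤ δ) :
    ∀ k : ℕ, 1 ≤ k → ∀ r : Fin 3, ∀ f : R3 → ℂ, MemV f →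
      l2norm (pd r ((fun g : R3 → ℂ => U (fun x => ν x * g x))^[k] f))
        ≤ δ ^ k * l2norm (pd r f)
          + (k : ℝ) * δ ^ (k - 1) * (⨆ x : R3, ‖pd r ν x‖) * l2norm f ∧
      l2norm (pd r ((fun g : R3 → ℂ => U (fun x => ν x * g x))^[k] f))
        ≤ (δ + ⨆ x : R3, ‖pd r ν x‖) * (k : ℝ) * δ ^ (k - 1)
          * (l2norm f + l2norm (pd r f)) := by
  intro k hk r f hf
  set T := fun g : R3 → ℂ => U fun x => ν x * g x
  set M := ⨆ x : R3, ‖pd r ν x‖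
  have hδ : 0 ≤ δ := (norm_nonneg (ν 0)).trans (hν_le 0)
  have hM_le : ∀ x, ‖pd r ν x‖ ≤ M :=
    le_ciSup ((hν.2.pd r).bddAbove_range_norm (hν.1.pd r).continuous)
  have hM : 0 ≤ M := (norm_nonneg (pd r ν 0)).trans (hM_le 0)
  have hT : ∀ n, MemV (T^[n] f) := Iterate.rec MemV hf fun g hg => hU_mem _ (hν.mul hg)
  have hbound := le_pow_mul_add_of_le_mul_add (a := fun n => l2norm (T^[n] f))
    (b := fun n => l2norm (pd r (T^[n] f))) hδ hM
    (fun n => by simpa only [iterate_succ_apply'] using l2norm_map_mul_le hU_iso hν (hT n) hν_le)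
    (fun n => by
      simpa only [iterate_succ_apply'] using
        l2norm_pd_map_mul_le hU_mem hU_add hU_iso hU_comm hν (hT n) r hν_le hM_le) k
  exact ⟨hbound, hbound.trans (pow_mul_add_le_mul hδ hM (l2norm_nonneg f) (l2norm_nonneg _) hk)⟩

/-- Inequality (10) in the proof of Proposition 1: if `U : V → V` is ℂ-linear,
preserves the `L²` norm and commutes with the partial derivatives, `|ν| ≤ δ < 1`,
and `T f = U (ν·f)`, then
`‖∂(T^k f)/∂x_r‖ ≤ δ^k ‖∂f/∂x_r‖ + k δ^{k−1} (sup |∂ν/∂x_r|) ‖f‖`, and in particular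
`‖∂(T^k f)/∂x_r‖ ≤ c k δ^{k−1} (‖f‖ + ‖∂f/∂x_r‖)` with `c = δ + sup |∂ν/∂x_r|`. -/
theorem proposition1_estimate (U : (R3 → ℂ) → (R3 → ℂ))
    (hU_mem : ∀ u, MemV u → MemV (U u))
    (hU_add : ∀ u v, MemV u → MemV v → U (u + v) = U u + U v)
    (hU_smul : ∀ (c : ℂ) (u), MemV u → U (c • u) = c • U u)
    (hU_iso : ∀ u, MemV u → l2norm (U u) = l2norm u)
    (hU_comm : ∀ u, MemV u → ∀ i : Fin 3, U (pd i u) = pd i (U u))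
    (δ : ℝ) (hδ0 : 0 < δ) (hδ1 : δ < 1)
    (ν : R3 → ℂ) (hν : MemV ν) (hν_le : ∀ x, ‖ν x‖ ≤ δ) :
    ∀ k : ℕ, 1 ≤ k → ∀ r : Fin 3, ∀ f : R3 → ℂ, MemV f →
      l2norm (pd r ((fun g : R3 → ℂ => U (fun x => ν x * g x))^[k] f))
        ≤ δ ^ k * l2norm (pd r f)
          + (k : ℝ) * δ ^ (k - 1) * (⨆ x : R3, ‖pd r ν x‖) * l2norm f ∧
      l2norm (pd r ((fun g : R3 → ℂ => U (fun x => ν x * g x))^[k] f))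
        ≤ (δ + ⨆ x : R3, ‖pd r ν x‖) * (k : ℝ) * δ ^ (k - 1)
          * (l2norm f + l2norm (pd r f)) :=
  proposition1_estimate_general U hU_mem hU_add hU_iso hU_comm δ ν hν hν_le
end
end

section
/- Let a₁, a₂ be real numbers and suppose there exist integers p, q such that α = p·a₁ + q·a₂ is a Diophantine number, i.e. there exist C₀ > 0 and s₀ > 1 such that |α − m/k| > C₀/|k|^{s₀+1} for every pair of integers m, k with k ≠ 0. Then the linear foliation F determined by (a₁,a₂) is Diophantine: there exist C > 0 and s > 1 such that |p' + k a₁| + |m' + k a₂| > C/(|p'| + |m'| + |k|)^s for every (p',m',k) ∈ ℤ³ \ {0}. -/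
/-- Example 1: if the additive subgroup generated by `a₁`, `a₂` contains a Diophantine
number `α = p a₁ + q a₂` (i.e. `|α − m/k| > C₀/|k|^{s₀+1}` for all `m, k ∈ ℤ`, `k ≠ 0`),
then the linear foliation determined by `(a₁, a₂)` is Diophantine: there are `C > 0`
and `s > 1` with `|p' + k a₁| + |m' + k a₂| > C/(|p'|+|m'|+|k|)^s` for every
`(p',m',k) ∈ ℤ³ \ {0}`. -/
theorem example1_diophantine (a₁ a₂ : ℝ) (p q : ℤ)
    (C₀ : ℝ) (hC₀ : 0 < C₀) (s₀ : ℝ) (hs₀ : 1 < s₀)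
    (hdio : ∀ m k : ℤ, k ≠ 0 →
      C₀ / |(k : ℝ)| ^ (s₀ + 1) < |((p : ℝ) * a₁ + (q : ℝ) * a₂) - (m : ℝ) / (k : ℝ)|) :
    ∃ C : ℝ, 0 < C ∧ ∃ s : ℝ, 1 < s ∧ ∀ p' m' k : ℤ, (p', m', k) ≠ (0, 0, 0) →
      C / (|(p' : ℝ)| + |(m' : ℝ)| + |(k : ℝ)|) ^ s
        < |(p' : ℝ) + k * a₁| + |(m' : ℝ) + k * a₂| := by
  set α : ℝ := (p : ℝ) * a₁ + (q : ℝ) * a₂ with hα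
  set M : ℝ := |(p : ℝ)| + |(q : ℝ)| + 1 with hM
  have hpabs : (0:ℝ) ≤ |(p:ℝ)| := abs_nonneg _
  have hqabs : (0:ℝ) ≤ |(q:ℝ)| := abs_nonneg _
  have hM1 : (1:ℝ) ≤ M := by simp only [hM]; linarith
  have hMpos : (0:ℝ) < M := by linarith
  refine ⟨min (C₀ / M) (1/2), lt_min (div_pos hC₀ hMpos) (by norm_num), s₀, hs₀, ?_⟩
  intro p' m' k hne
  set N : ℝ := |(p' : ℝ)| + |(m' : ℝ)| + |(k : ℝ)| with hN
  have hne' : ¬(p' = 0 ∧ m' = 0 ∧ k = 0) := by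
    simpa [Prod.ext_iff] using hne
  have hNZ : (1:ℤ) ≤ |p'| + |m'| + |k| := by
    rcases hne' with h
    rw [Int.abs_eq_natAbs, Int.abs_eq_natAbs, Int.abs_eq_natAbs]
    omega
  have hN1 : (1:ℝ) ≤ N := by
    have : ((1:ℤ):ℝ) ≤ ((|p'| + |m'| + |k| : ℤ) : ℝ) := by exact_mod_cast hNZ
    simpa [hN] using this
  have hNpos : (0:ℝ) < N := by linarith
  have hNs1 : (1:ℝ) ≤ N ^ s₀ := Real.one_le_rpow hN1 (by linarith)
  have hNspos : (0:ℝ) < N ^ s₀ := by linarith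
  by_cases hk0 : k = 0
  · -- k = 0 case
    subst hk0
    have hpm : (1:ℝ) ≤ |(p' : ℝ)| + |(m' : ℝ)| := by
      simp only [hN, Int.cast_zero, abs_zero, add_zero] at hN1
      exact hN1
    have h2 : (1/2 : ℝ) / N ^ s₀ ≤ 1/2 :=
      div_le_self (by norm_num) hNs1
    have : min (C₀ / M) (1/2) / N ^ s₀ < |(p' : ℝ)| + |(m' : ℝ)| := by
      calc min (C₀ / M) (1/2) / N ^ s₀ ≤ (1/2 : ℝ) / N ^ s₀ := by
            gcongr; exact min_le_right _ _
        _ ≤ 1/2 := h2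
        _ < 1 := by norm_num
        _ ≤ _ := hpm
    simpa using this
  · -- k ≠ 0 case
    have hkR : ((k:ℝ)) ≠ 0 := Int.cast_ne_zero.mpr hk0
    have hk1 : (1:ℝ) ≤ |(k:ℝ)| := by
      have : (1:ℤ) ≤ |k| := Int.one_le_abs hk0
      exact_mod_cast this
    have hkpos : (0:ℝ) < |(k:ℝ)| := by linarith
    have hkspos : (0:ℝ) < |(k:ℝ)| ^ s₀ := Real.rpow_pos_of_pos hkpos _
    have hdk := hdio (-(p * p' + q * m')) k hk0
    set A : ℝ := |(p' : ℝ) + k * a₁| with hA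
    set B : ℝ := |(m' : ℝ) + k * a₂| with hB
    have hAnn : 0 ≤ A := abs_nonneg _
    have hBnn : 0 ≤ B := abs_nonneg _
    -- key rewrite
    have key : |α - ((-(p * p' + q * m') : ℤ) : ℝ) / (k : ℝ)| * |(k:ℝ)|
        = |(k:ℝ) * α + ((p:ℝ) * p' + (q:ℝ) * m')| := by
      rw [← abs_mul]
      congr 1
      push_cast
      field_simp
      ring
    have hks : |(k:ℝ)| ^ (s₀ + 1) = |(k:ℝ)| ^ s₀ * |(k:ℝ)| := by
      rw [Real.rpow_add hkpos, Real.rpow_one]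
    have h2 : C₀ / |(k:ℝ)| ^ s₀ < |(k:ℝ) * α + ((p:ℝ) * p' + (q:ℝ) * m')| := by
      rw [← key]
      calc C₀ / |(k:ℝ)| ^ s₀ = C₀ / |(k:ℝ)| ^ (s₀ + 1) * |(k:ℝ)| := by
            rw [hks]; field_simp
        _ < _ := mul_lt_mul_of_pos_right hdk hkpos
    have triangle : |(k:ℝ) * α + ((p:ℝ) * p' + (q:ℝ) * m')| ≤ M * (A + B) := by
      have hid : (k:ℝ) * α + ((p:ℝ) * p' + (q:ℝ) * m')
          = (p:ℝ) * ((p':ℝ) + k * a₁) + (q:ℝ) * ((m':ℝ) + k * a₂) := by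
        rw [hα]; ring
      rw [hid]
      calc |(p:ℝ) * ((p':ℝ) + k * a₁) + (q:ℝ) * ((m':ℝ) + k * a₂)|
          ≤ |(p:ℝ)| * A + |(q:ℝ)| * B := by
            rw [hA, hB, ← abs_mul, ← abs_mul]; exact abs_add_le _ _
        _ ≤ M * A + M * B := add_le_add
            (mul_le_mul_of_nonneg_right (by linarith) hAnn)
            (mul_le_mul_of_nonneg_right (by linarith) hBnn)
        _ = M * (A + B) := by ring
    have hAB : C₀ / |(k:ℝ)| ^ s₀ / M < A + B := by
      rw [div_lt_iff₀ hMpos]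
      calc C₀ / |(k:ℝ)| ^ s₀ < |(k:ℝ) * α + ((p:ℝ) * p' + (q:ℝ) * m')| := h2
        _ ≤ M * (A + B) := triangle
        _ = (A + B) * M := by ring
    have hkN : |(k:ℝ)| ≤ N := by
      simp only [hN]
      have := abs_nonneg ((p':ℤ):ℝ)
      have := abs_nonneg ((m':ℤ):ℝ)
      linarith [abs_nonneg ((p':ℝ)), abs_nonneg ((m':ℝ))]
    have hkNs : |(k:ℝ)| ^ s₀ ≤ N ^ s₀ :=
      Real.rpow_le_rpow (abs_nonneg _) hkN (by linarith)
    calc min (C₀ / M) (1/2) / N ^ s₀ ≤ (C₀ / M) / N ^ s₀ := by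
          gcongr; exact min_le_left _ _
      _ ≤ (C₀ / M) / |(k:ℝ)| ^ s₀ := by
          gcongr
      _ = C₀ / |(k:ℝ)| ^ s₀ / M := by ring
      _ < A + B := hAB
end
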